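/- Let E and F be homogeneous Moran sets with the same parameters ([0,1], {n_k}, {r_k}), with uniform Bernoulli measures μ and ν respectively, and let f : E → F be a bi-Lipschitz map. Then the measure f*ν : B ↦ ν(f(B)) is equivalent to μ in the strong sense: there exists α > 0 such that α^{-1}·μ(B) ≤ ν(f(B)) ≤ α·μ(B) for every Borel set B ⊆ E. -/

import Mathlib

open Set MeasureTheory
open scoped ENNReal

/-- `σ = (σ₁, …, σ_k)` is a valid word for the sequence `n`: its `i`-th entry
(1-based position `i+1` for 0-based index `i`) is smaller than `n (i+1)`. -/
def IsWord (n : ℕ → ℕ) (σ : List ℕ) : Prop :=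
  ∀ i : Fin σ.length, σ.get i < n (i + 1)

/-- A homogeneous Moran structure with parameters `([0,1], {n_k}, {r_k})`:
a family of closed intervals `J σ` indexed by words, with `J ∅ = [0,1]`,
nested, with pairwise disjoint interiors at each level, and
`|J (σ*i)| = r_{k} |J σ|` for `σ` of length `k-1`. -/
structure MoranStructure (n : ℕ → ℕ) (r : ℕ → ℝ) where
  J : List ℕ → Set ℝ
  J_empty : J [] = Set.Icc 0 1
  J_closedInterval : ∀ σ : List ℕ, IsWord n σ → ∃ a b : ℝ, a ≤ b ∧ J σ = Set.Icc a b
  J_subset : ∀ σ : List ℕ, IsWord n σ → ∀ i < n (σ.length + 1), J (σ ++ [i]) ⊆ J σ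
  J_disjointInterior : ∀ σ : List ℕ, IsWord n σ → ∀ i < n (σ.length + 1),
      ∀ j < n (σ.length + 1), i ≠ j →
      interior (J (σ ++ [i])) ∩ interior (J (σ ++ [j])) = ∅
  J_diam : ∀ σ : List ℕ, IsWord n σ → ∀ i < n (σ.length + 1),
      Metric.diam (J (σ ++ [i])) = r (σ.length + 1) * Metric.diam (J σ)

variable {n : ℕ → ℕ} {r : ℕ → ℝ}

/-- The `k`-th approximation `E_k`: the union of all basic intervals of rank `k`. -/
def MoranStructure.approx (M : MoranStructure n r) (k : ℕ) : Set ℝ :=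
  ⋃ σ ∈ {σ : List ℕ | σ.length = k ∧ IsWord n σ}, M.J σ

/-- The homogeneous Moran set `E = ⋂_k E_k`. -/
def MoranStructure.moranSet (M : MoranStructure n r) : Set ℝ :=
  ⋂ k, M.approx k

/-- The total gap of rank `k`: `Δ_k = r_1 ⋯ r_{k-1} (1 - n_k r_k)`. -/
noncomputable def totalGap (n : ℕ → ℕ) (r : ℕ → ℝ) (k : ℕ) : ℝ :=
  (∏ j ∈ Finset.Icc 1 (k - 1), r j) * (1 - (n k : ℝ) * r k)

/-- Distance between two subsets of `ℝ`: `dist(A,B) = inf {|x-y| : x ∈ A, y ∈ B}`. -/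
noncomputable def setDist (A B : Set ℝ) : ℝ :=
  sInf {d : ℝ | ∃ x ∈ A, ∃ y ∈ B, d = |x - y|}

/-- The weak separation condition with constant `η₀`. -/
def MoranStructure.WSC (M : MoranStructure n r) (η₀ : ℝ) : Prop :=
  ∀ σ : List ℕ, IsWord n σ → ∀ i < n (σ.length + 1), ∀ j < n (σ.length + 1), i ≠ j →
    (M.J (σ ++ [i]) ∩ M.J (σ ++ [j])).Nonempty ∨
      setDist (M.J (σ ++ [i])) (M.J (σ ++ [j])) >
        η₀ * (Metric.diam (M.J σ) -
          ∑ m ∈ Finset.range (n (σ.length + 1)), Metric.diam (M.J (σ ++ [m])))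

/-- `μ` is the uniform Bernoulli measure of the Moran structure `M`:
a Borel probability measure concentrated on the Moran set, giving each
cylinder of rank `k` measure `1/(n_1 ⋯ n_k)`. -/
def IsUniformBernoulli (M : MoranStructure n r) (μ : Measure ℝ) : Prop :=
  IsProbabilityMeasure μ ∧ μ M.moranSetᶜ = 0 ∧
    ∀ σ : List ℕ, IsWord n σ →
      μ (M.J σ ∩ M.moranSet) = 1 / ∏ j ∈ Finset.Icc 1 σ.length, (n j : ℝ≥0∞)

/-- `I` is a connected component of the set `S ⊆ ℝ`. -/
def IsCC (S I : Set ℝ) : Prop := ∃ x ∈ S, I = connectedComponentIn S x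

/-- `X` is `δ`-connected: any two points of `X` are joined by a finite chain
of points of `X` with consecutive distances at most `δ`. -/
def DeltaConnected (δ : ℝ) (X : Set ℝ) : Prop :=
  ∀ x ∈ X, ∀ y ∈ X, ∃ (m : ℕ) (z : Fin (m + 1) → ℝ),
    (∀ i, z i ∈ X) ∧ z 0 = x ∧ z (Fin.last m) = y ∧
      ∀ i : Fin m, |z i.castSucc - z i.succ| ≤ δ

/-!
A `C`-Lipschitz image of a rank-`k` cylinder `E_σ` lies in an interval of length `2C|J_σ|`. All
rank-`k` basic intervals of `F` have the same length `|J_σ|` and disjoint interiors, so at most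
`2C + 2` of them meet that interval; as every rank-`k` cylinder of either set carries mass
`1/(n_1⋯n_k)`, this gives `ν(f(E_σ)) ≤ (2C + 2) μ(E_σ)`. For `U` open, `E ∩ U` is covered by the
maximal basic intervals contained in `U`, which overlap only in (μ-null) endpoints, so the bound
holds for `E ∩ U`, and by outer regularity of `μ` for every subset of `E`. The same bound for the
inverse map `F → E` gives the lower estimate.
-/

open Function Metric
open scoped NNReal Topology

theorem List.exists_minimal_prefix_mem {α : Type*} {S : Set (List α)} {σ : List α}
    (hσ : σ ∈ S) : ∃ p ∈ S, p <+: σ ∧ ∀ q ∈ S, q <+: p → q = p := by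
  obtain ⟨p, ⟨hpS, hpσ⟩, hmin⟩ :=
    (measure List.length).wf.has_min {p | p ∈ S ∧ p <+: σ} ⟨σ, hσ, List.prefix_rfl⟩
  refine ⟨p, hpS, hpσ, fun q hqS hqp => hqp.eq_of_length ?_⟩
  exact le_antisymm hqp.length_le (not_lt.mp (hmin q ⟨hqS, hqp.trans hpσ⟩))

theorem Set.finite_of_forall_finset_card_le {α : Type*} {s : Set α} {m : ℕ}
    (h : ∀ t : Finset α, ↑t ⊆ s → t.card ≤ m) : s.Finite := by
  by_contra hs
  obtain ⟨t, hts, ht⟩ := Set.Infinite.exists_subset_card_eq hs (m + 1)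
  have := h t hts
  omega

theorem Set.subsingleton_Icc_inter_Icc_of_disjoint_Ioo {α : Type*} [LinearOrder α]
    [DenselyOrdered α] {a b c d : α} (h : Disjoint (Ioo a b) (Ioo c d)) :
    (Icc a b ∩ Icc c d).Subsingleton := by
  rw [Set.disjoint_iff_inter_eq_empty, Set.Ioo_inter_Ioo, Set.Ioo_eq_empty_iff, not_lt] at h
  rw [Set.Icc_inter_Icc]
  exact Set.subsingleton_Icc_of_ge h

theorem card_mul_le_of_pairwiseDisjoint {ι : Type*} {s : Finset ι} {I : ι → Set ℝ} {ℓ c d : ℝ}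
    (hcd : c ≤ d) (hmeas : ∀ i ∈ s, MeasurableSet (I i))
    (hvol : ∀ i ∈ s, volume (I i) = ENNReal.ofReal ℓ)
    (hdisj : (s : Set ι).PairwiseDisjoint I) (hsub : ∀ i ∈ s, I i ⊆ Icc c d) :
    s.card * ℓ ≤ d - c := by
  rw [← ENNReal.ofReal_le_ofReal_iff (sub_nonneg.mpr hcd), ENNReal.ofReal_mul (Nat.cast_nonneg _),
    ENNReal.ofReal_natCast, ← Real.volume_Icc, ← nsmul_eq_mul, ← Finset.sum_const,
    ← Finset.sum_congr rfl hvol, ← measure_biUnion_finset hdisj hmeas]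
  exact measure_mono (Set.iUnion₂_subset hsub)

theorem lipschitzOnWith_invFunOn {α β : Type*} [PseudoMetricSpace α] [PseudoMetricSpace β]
    [Nonempty α] {f : α → β} {s : Set α} {K : ℝ}
    (h : ∀ x ∈ s, ∀ y ∈ s, dist x y ≤ K * dist (f x) (f y)) :
    LipschitzOnWith (Real.toNNReal K) (invFunOn f s) (f '' s) := by
  refine LipschitzOnWith.of_dist_le' ?_
  rintro _ ⟨x, hx, rfl⟩ _ ⟨y, hy, rfl⟩
  obtain ⟨hx's, hx'⟩ := invFunOn_pos (f := f) ⟨x, hx, rfl⟩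
  obtain ⟨hy's, hy'⟩ := invFunOn_pos (f := f) ⟨y, hy, rfl⟩
  simpa only [hx', hy'] using h _ hx's _ hy's

theorem prod_le_half_pow (hn : ∀ k ≥ 1, 2 ≤ n k) (hr : ∀ k ≥ 1, 0 < r k ∧ n k * r k ≤ 1)
    (k : ℕ) : ∏ j ∈ Finset.Icc 1 k, r j ≤ 2⁻¹ ^ k := by
  have hr_le : ∀ j ∈ Finset.Icc 1 k, r j ≤ 2⁻¹ := fun j hj => by
    obtain ⟨hr₀, hnr⟩ := hr j (Finset.mem_Icc.mp hj).1
    have h2 : (2 : ℝ) ≤ n j := by exact_mod_cast hn j (Finset.mem_Icc.mp hj).1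
    nlinarith
  calc ∏ j ∈ Finset.Icc 1 k, r j ≤ ∏ _j ∈ Finset.Icc 1 k, (2⁻¹ : ℝ) :=
        Finset.prod_le_prod (fun j hj => (hr j (Finset.mem_Icc.mp hj).1).1.le) hr_le
    _ = 2⁻¹ ^ k := by simp

theorem inv_prod_le_half_pow (hn : ∀ k ≥ 1, 2 ≤ n k) (k : ℕ) :
    (∏ j ∈ Finset.Icc 1 k, (n j : ℝ≥0∞))⁻¹ ≤ 2⁻¹ ^ k := by
  rw [← ENNReal.inv_pow, ENNReal.inv_le_inv]
  refine le_of_eq_of_le (by simp : (2 : ℝ≥0∞) ^ k = ∏ _j ∈ Finset.Icc 1 k, 2) ?_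
  exact Finset.prod_le_prod' fun j hj => by exact_mod_cast hn j (Finset.mem_Icc.mp hj).1

theorem isWord_iff {σ : List ℕ} : IsWord n σ ↔ ∀ (i : ℕ) (hi : i < σ.length), σ[i] < n (i + 1) :=
  Fin.forall_iff

theorem isWord_append_singleton {σ : List ℕ} {i : ℕ} :
    IsWord n (σ ++ [i]) ↔ IsWord n σ ∧ i < n (σ.length + 1) := by
  simp only [isWord_iff, List.length_append, List.length_singleton]
  constructor
  · intro h
    refine ⟨fun m hm => ?_, by simpa using h σ.length (by omega)⟩
    simpa [List.getElem_append_left hm] using h m (by omega)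
  · rintro ⟨h, hi⟩ m hm
    obtain hm | rfl := Nat.lt_succ_iff_lt_or_eq.mp hm
    · simpa [List.getElem_append_left hm] using h m hm
    · simpa using hi

theorem IsWord.of_prefix {σ τ : List ℕ} (hτ : IsWord n τ) (h : σ <+: τ) : IsWord n σ := by
  rw [isWord_iff] at hτ ⊢
  intro i hi
  rw [h.getElem hi]
  exact hτ i _

namespace MoranStructure

variable (M : MoranStructure n r)

def cylinder (σ : List ℕ) : Set ℝ := M.J σ ∩ M.moranSet

theorem J_subset_of_prefix {σ τ : List ℕ} (hτ : IsWord n τ) (h : σ <+: τ) : M.J τ ⊆ M.J σ := by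
  obtain ⟨t, rfl⟩ := h
  induction t using List.reverseRecOn with
  | nil => simp
  | append_singleton t i ih =>
    rw [← List.append_assoc] at hτ ⊢
    obtain ⟨hw, hi⟩ := isWord_append_singleton.mp hτ
    exact (M.J_subset _ hw i hi).trans (ih hw)

theorem diam_J {σ : List ℕ} (hσ : IsWord n σ) :
    diam (M.J σ) = ∏ j ∈ Finset.Icc 1 σ.length, r j := by
  induction σ using List.reverseRecOn with
  | nil => simp [M.J_empty, Real.diam_Icc zero_le_one]
  | append_singleton σ i ih =>
    obtain ⟨hw, hi⟩ := isWord_append_singleton.mp hσ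
    rw [M.J_diam σ hw i hi, ih hw, List.length_append, List.length_singleton,
      Finset.prod_Icc_succ_top (Nat.le_add_left 1 _), mul_comm]

theorem dist_le_of_mem_J {σ : List ℕ} (hσ : IsWord n σ) {x y : ℝ} (hx : x ∈ M.J σ)
    (hy : y ∈ M.J σ) : dist x y ≤ ∏ j ∈ Finset.Icc 1 σ.length, r j := by
  obtain ⟨a, b, -, hJ⟩ := M.J_closedInterval σ hσ
  rw [← M.diam_J hσ]
  exact dist_le_diam_of_mem (hJ ▸ isBounded_Icc a b) hx hy

theorem volume_interior_J {σ : List ℕ} (hσ : IsWord n σ) :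
    volume (interior (M.J σ)) = ENNReal.ofReal (∏ j ∈ Finset.Icc 1 σ.length, r j) := by
  obtain ⟨a, b, hab, hJ⟩ := M.J_closedInterval σ hσ
  rw [← M.diam_J hσ, hJ, interior_Icc, Real.volume_Ioo, Real.diam_Icc hab]

theorem disjoint_interior_of_length_eq {σ τ : List ℕ} (hσ : IsWord n σ) (hτ : IsWord n τ)
    (hlen : σ.length = τ.length) (hne : σ ≠ τ) :
    Disjoint (interior (M.J σ)) (interior (M.J τ)) := by
  induction σ using List.reverseRecOn generalizing τ with
  | nil => exact absurd (List.length_eq_zero_iff.mp hlen.symm).symm hne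
  | append_singleton σ i ih =>
    obtain rfl | ⟨τ, j, rfl⟩ := τ.eq_nil_or_concat'
    · simp at hlen
    obtain ⟨hσ', hi⟩ := isWord_append_singleton.mp hσ
    obtain ⟨hτ', hj⟩ := isWord_append_singleton.mp hτ
    have hlen' : σ.length = τ.length := by simpa using hlen
    by_cases hστ : σ = τ
    · subst hστ
      exact Set.disjoint_iff_inter_eq_empty.mpr
        (M.J_disjointInterior σ hσ' i hi j hj (by simpa using hne))
    · exact (ih hσ' hτ' hlen' hστ).mono (interior_mono (M.J_subset σ hσ' i hi))
        (interior_mono (M.J_subset τ hτ' j (hlen' ▸ hj)))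

theorem disjoint_interior_of_not_prefix {σ τ : List ℕ} (hσ : IsWord n σ) (hτ : IsWord n τ)
    (hστ : ¬ σ <+: τ) (hτσ : ¬ τ <+: σ) :
    Disjoint (interior (M.J σ)) (interior (M.J τ)) := by
  wlog hle : σ.length ≤ τ.length generalizing σ τ
  · exact (this hτ hσ hτσ hστ (le_of_not_ge hle)).symm
  have htake : τ.take σ.length <+: τ := List.take_prefix _ _
  refine (M.disjoint_interior_of_length_eq hσ (hτ.of_prefix htake) (by simp [hle]) ?_).mono_right
    (interior_mono (M.J_subset_of_prefix hτ htake))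
  intro h
  exact hστ (h ▸ htake)

theorem inter_J_subsingleton {σ τ : List ℕ} (hσ : IsWord n σ) (hτ : IsWord n τ)
    (hστ : ¬ σ <+: τ) (hτσ : ¬ τ <+: σ) : (M.J σ ∩ M.J τ).Subsingleton := by
  have hdisj := M.disjoint_interior_of_not_prefix hσ hτ hστ hτσ
  obtain ⟨a, b, -, hJσ⟩ := M.J_closedInterval σ hσ
  obtain ⟨c, d, -, hJτ⟩ := M.J_closedInterval τ hτ
  rw [hJσ, hJτ, interior_Icc, interior_Icc] at hdisj
  rw [hJσ, hJτ]
  exact Set.subsingleton_Icc_inter_Icc_of_disjoint_Ioo hdisj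

theorem exists_mem_J {x : ℝ} (hx : x ∈ M.moranSet) (k : ℕ) :
    ∃ σ, σ.length = k ∧ IsWord n σ ∧ x ∈ M.J σ := by
  simpa [moranSet, approx, and_assoc] using Set.mem_iInter.mp hx k

theorem measurableSet_cylinder {σ : List ℕ} (hσ : IsWord n σ) :
    MeasurableSet (M.cylinder σ) := by
  have hJ : ∀ τ, IsWord n τ → MeasurableSet (M.J τ) := fun τ hτ => by
    obtain ⟨a, b, -, hJ⟩ := M.J_closedInterval τ hτ
    exact hJ ▸ measurableSet_Icc
  refine (hJ σ hσ).inter (MeasurableSet.iInter fun k => ?_)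
  exact MeasurableSet.biUnion (Set.to_countable _) fun τ hτ => hJ τ hτ.2

theorem exists_mem_J_subset (hn : ∀ k ≥ 1, 2 ≤ n k) (hr : ∀ k ≥ 1, 0 < r k ∧ n k * r k ≤ 1)
    {x : ℝ} (hx : x ∈ M.moranSet) {U : Set ℝ} (hU : U ∈ 𝓝 x) :
    ∃ σ, IsWord n σ ∧ x ∈ M.J σ ∧ M.J σ ⊆ U := by
  obtain ⟨ε, hε, hball⟩ := Metric.mem_nhds_iff.mp hU
  obtain ⟨k, hk⟩ := exists_pow_lt_of_lt_one hε (by norm_num : (2⁻¹ : ℝ) < 1)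
  obtain ⟨σ, rfl, hσ, hxσ⟩ := M.exists_mem_J hx k
  refine ⟨σ, hσ, hxσ, fun y hy => hball ?_⟩
  calc dist y x ≤ ∏ j ∈ Finset.Icc 1 σ.length, r j := M.dist_le_of_mem_J hσ hy hxσ
    _ ≤ 2⁻¹ ^ σ.length := prod_le_half_pow hn hr _
    _ < ε := hk

theorem card_mul_le_of_inter_closedBall_nonempty (hr : ∀ k ≥ 1, 0 < r k) {k : ℕ} {y R : ℝ}
    (hR : 0 ≤ R) (s : Finset (List ℕ))
    (hs : ∀ τ ∈ s, τ.length = k ∧ IsWord n τ ∧ (M.J τ ∩ closedBall y R).Nonempty) :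
    s.card * ∏ j ∈ Finset.Icc 1 k, r j ≤ 2 * (R + ∏ j ∈ Finset.Icc 1 k, r j) := by
  set ℓ := ∏ j ∈ Finset.Icc 1 k, r j
  have hℓ : 0 < ℓ := Finset.prod_pos fun j hj => hr j (Finset.mem_Icc.mp hj).1
  have hsub : ∀ τ ∈ s, interior (M.J τ) ⊆ closedBall y (R + ℓ) := by
    intro τ hτ w hw
    obtain ⟨rfl, hτw, z, hzτ, hzy⟩ := hs τ hτ
    calc dist w y ≤ dist w z + dist z y := dist_triangle w z y
      _ ≤ ℓ + R := add_le_add (M.dist_le_of_mem_J hτw (interior_subset hw) hzτ) hzy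
      _ = R + ℓ := add_comm ℓ R
  simp only [Real.closedBall_eq_Icc] at hsub
  have := card_mul_le_of_pairwiseDisjoint (by linarith)
    (fun τ _ => isOpen_interior.measurableSet)
    (fun τ hτ => (hs τ hτ).1 ▸ M.volume_interior_J (hs τ hτ).2.1)
    (fun σ hσ τ hτ hne => M.disjoint_interior_of_length_eq (hs σ hσ).2.1 (hs τ hτ).2.1
      ((hs σ hσ).1.trans (hs τ hτ).1.symm) hne) hsub
  linarith

end MoranStructure

namespace IsUniformBernoulli

variable {M : MoranStructure n r} {μ : Measure ℝ}

theorem nullSingletonClass (hμ : IsUniformBernoulli M μ) (hn : ∀ k ≥ 1, 2 ≤ n k) :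
    NullSingletonClass μ := by
  refine ⟨fun x => ?_⟩
  by_cases hx : x ∈ M.moranSet
  · refine nonpos_iff_eq_zero.mp <| ge_of_tendsto' (ENNReal.tendsto_pow_atTop_nhds_zero_of_lt_one
    (by norm_num : (2⁻¹ : ℝ≥0∞) < 1)) fun k => ?_
    obtain ⟨σ, rfl, hσ, hxσ⟩ := M.exists_mem_J hx k
    calc μ {x} ≤ μ (M.cylinder σ) := measure_mono (Set.singleton_subset_iff.mpr ⟨hxσ, hx⟩)
      _ = (∏ j ∈ Finset.Icc 1 σ.length, (n j : ℝ≥0∞))⁻¹ := by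
        rw [MoranStructure.cylinder, hμ.2.2 σ hσ, one_div]
      _ ≤ 2⁻¹ ^ σ.length := inv_prod_le_half_pow hn _
  · exact measure_mono_null (Set.singleton_subset_iff.mpr hx) hμ.2.1

theorem aedisjoint_cylinder (hμ : IsUniformBernoulli M μ) (hn : ∀ k ≥ 1, 2 ≤ n k)
    {σ τ : List ℕ} (hσ : IsWord n σ) (hτ : IsWord n τ) (hστ : ¬ σ <+: τ) (hτσ : ¬ τ <+: σ) :
    AEDisjoint μ (M.cylinder σ) (M.cylinder τ) :=
  have := hμ.nullSingletonClass hn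
  measure_mono_null (Set.inter_subset_inter Set.inter_subset_left Set.inter_subset_left)
    ((M.inter_J_subsingleton hσ hτ hστ hτσ).measure_zero μ)

end IsUniformBernoulli

section LipschitzImage

variable {M₁ M₂ : MoranStructure n r} {μ₁ μ₂ : Measure ℝ} {K : ℝ≥0} {f : ℝ → ℝ}

theorem measure_image_cylinder_le (hr : ∀ k ≥ 1, 0 < r k) (hμ₁ : IsUniformBernoulli M₁ μ₁)
    (hμ₂ : IsUniformBernoulli M₂ μ₂) (hf : LipschitzOnWith K f M₁.moranSet)
    (hmaps : MapsTo f M₁.moranSet M₂.moranSet) {σ : List ℕ} (hσ : IsWord n σ) :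
    μ₂ (f '' M₁.cylinder σ) ≤ (2 * K + 2) * μ₁ (M₁.cylinder σ) := by
  obtain hempty | ⟨x₀, hx₀⟩ := (M₁.cylinder σ).eq_empty_or_nonempty
  · simp [hempty]
  set ℓ := ∏ j ∈ Finset.Icc 1 σ.length, r j
  have hℓ : 0 < ℓ := Finset.prod_pos fun j hj => hr j (Finset.mem_Icc.mp hj).1
  set T := {τ | τ.length = σ.length ∧ IsWord n τ ∧
    (M₂.J τ ∩ closedBall (f x₀) (K * ℓ)).Nonempty}
  have hcover : f '' M₁.cylinder σ ⊆ ⋃ τ ∈ T, M₂.cylinder τ := by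
    rintro _ ⟨x, hx, rfl⟩
    obtain ⟨τ, hτlen, hτ, hxτ⟩ := M₂.exists_mem_J (hmaps hx.2) σ.length
    refine Set.mem_biUnion ⟨hτlen, hτ, f x, hxτ, ?_⟩ ⟨hxτ, hmaps hx.2⟩
    calc dist (f x) (f x₀) ≤ K * dist x x₀ := hf.dist_le_mul x hx.2 x₀ hx₀.2
      _ ≤ K * ℓ := by gcongr; exact M₁.dist_le_of_mem_J hσ hx.1 hx₀.1
  have hcard : ∀ t : Finset (List ℕ), ↑t ⊆ T → (t.card : ℝ) ≤ 2 * K + 2 := fun t ht => by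
    have := M₂.card_mul_le_of_inter_closedBall_nonempty hr (by positivity) t fun τ hτ => ht hτ
    exact le_of_mul_le_mul_right (this.trans_eq (by ring)) hℓ
  have hT : T.Finite := Set.finite_of_forall_finset_card_le (m := ⌊2 * (K : ℝ) + 2⌋₊)
    fun t ht => Nat.le_floor (hcard t ht)
  calc μ₂ (f '' M₁.cylinder σ) ≤ μ₂ (⋃ τ ∈ hT.toFinset, M₂.cylinder τ) :=
        measure_mono (by simpa using hcover)
    _ ≤ ∑ τ ∈ hT.toFinset, μ₂ (M₂.cylinder τ) := measure_biUnion_finset_le _ _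
    _ = hT.toFinset.card * (1 / ∏ j ∈ Finset.Icc 1 σ.length, (n j : ℝ≥0∞)) := by
        rw [Finset.sum_congr rfl fun τ hτ => ?_, Finset.sum_const, nsmul_eq_mul]
        obtain ⟨hτlen, hτ, -⟩ := hT.mem_toFinset.mp hτ
        rw [MoranStructure.cylinder, hμ₂.2.2 τ hτ, hτlen]
    _ ≤ (2 * K + 2) * μ₁ (M₁.cylinder σ) := by
        rw [MoranStructure.cylinder, hμ₁.2.2 σ hσ]
        gcongr
        exact_mod_cast hcard _ (by simp)

theorem measure_image_inter_le_of_isOpen (hn : ∀ k ≥ 1, 2 ≤ n k)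
    (hr : ∀ k ≥ 1, 0 < r k ∧ n k * r k ≤ 1) (hμ₁ : IsUniformBernoulli M₁ μ₁)
    (hμ₂ : IsUniformBernoulli M₂ μ₂) (hf : LipschitzOnWith K f M₁.moranSet)
    (hmaps : MapsTo f M₁.moranSet M₂.moranSet) {U : Set ℝ} (hU : IsOpen U) :
    μ₂ (f '' (M₁.moranSet ∩ U)) ≤ (2 * K + 2) * μ₁ U := by
  set S := {σ | IsWord n σ ∧ M₁.J σ ⊆ U}
  -- prefix-minimal words of `S`, i.e. the maximal basic intervals inside `U`
  set Smin := {σ ∈ S | ∀ q ∈ S, q <+: σ → q = σ}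
  have hcover : M₁.moranSet ∩ U ⊆ ⋃ σ ∈ Smin, M₁.cylinder σ := by
    rintro x ⟨hxE, hxU⟩
    obtain ⟨σ, hσ, hxσ, hσU⟩ := M₁.exists_mem_J_subset hn hr hxE (hU.mem_nhds hxU)
    obtain ⟨p, hpS, hpσ, hpmin⟩ := List.exists_minimal_prefix_mem (S := S) ⟨hσ, hσU⟩
    exact Set.mem_biUnion ⟨hpS, hpmin⟩ ⟨M₁.J_subset_of_prefix hσ hpσ hxσ, hxE⟩
  have hincomp : ∀ σ ∈ Smin, ∀ τ ∈ Smin, σ ≠ τ → ¬ σ <+: τ :=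
    fun σ hσ τ hτ hne hστ => hne (hτ.2 σ hσ.1 hστ)
  have hdisj : Smin.Pairwise (AEDisjoint μ₁ on M₁.cylinder) := fun σ hσ τ hτ hne =>
    hμ₁.aedisjoint_cylinder hn hσ.1.1 hτ.1.1 (hincomp σ hσ τ hτ hne) (hincomp τ hτ σ hσ hne.symm)
  calc μ₂ (f '' (M₁.moranSet ∩ U)) ≤ μ₂ (⋃ σ ∈ Smin, f '' M₁.cylinder σ) := by
        rw [← Set.image_iUnion₂]
        exact measure_mono (Set.image_mono hcover)
    _ ≤ ∑' σ : Smin, μ₂ (f '' M₁.cylinder σ) := measure_biUnion_le μ₂ (Set.to_countable _) _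
    _ ≤ ∑' σ : Smin, (2 * K + 2) * μ₁ (M₁.cylinder σ) := ENNReal.tsum_le_tsum fun σ =>
        measure_image_cylinder_le (fun k hk => (hr k hk).1) hμ₁ hμ₂ hf hmaps σ.2.1.1
    _ = (2 * K + 2) * μ₁ (⋃ σ ∈ Smin, M₁.cylinder σ) := by
        rw [ENNReal.tsum_mul_left, measure_biUnion₀ (Set.to_countable _) hdisj
          fun σ hσ => (M₁.measurableSet_cylinder hσ.1.1).nullMeasurableSet]
    _ ≤ (2 * K + 2) * μ₁ U := by
        gcongr
        exact Set.iUnion₂_subset fun σ hσ => Set.inter_subset_left.trans hσ.1.2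

theorem measure_image_le (hn : ∀ k ≥ 1, 2 ≤ n k) (hr : ∀ k ≥ 1, 0 < r k ∧ n k * r k ≤ 1)
    (hμ₁ : IsUniformBernoulli M₁ μ₁) (hμ₂ : IsUniformBernoulli M₂ μ₂)
    (hf : LipschitzOnWith K f M₁.moranSet) (hmaps : MapsTo f M₁.moranSet M₂.moranSet)
    {A : Set ℝ} (hA : A ⊆ M₁.moranSet) : μ₂ (f '' A) ≤ (2 * K + 2) * μ₁ A := by
  have := hμ₁.1
  refine le_of_forall_pos_le_add fun ε hε => ?_
  have hc : (2 * K + 2 : ℝ≥0∞) ≠ 0 := by positivity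
  have hc' : (2 * K + 2 : ℝ≥0∞) ≠ ∞ := by simp [ENNReal.mul_eq_top]
  obtain ⟨U, hAU, hU, hμU⟩ := Set.exists_isOpen_lt_add A (measure_ne_top μ₁ A)
    (ENNReal.div_pos hε.ne' hc').ne'
  calc μ₂ (f '' A) ≤ μ₂ (f '' (M₁.moranSet ∩ U)) :=
        measure_mono (Set.image_mono (Set.subset_inter hA hAU))
    _ ≤ (2 * K + 2) * μ₁ U := measure_image_inter_le_of_isOpen hn hr hμ₁ hμ₂ hf hmaps hU
    _ ≤ (2 * K + 2) * (μ₁ A + ε / (2 * K + 2)) := by gcongr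
    _ = (2 * K + 2) * μ₁ A + ε := by rw [mul_add, ENNReal.mul_div_cancel hc hc']

end LipschitzImage

/-- **Theorem (equivalence of `f*ν` and `μ`).**
If `f : E → F` is a bi-Lipschitz map between homogeneous Moran sets with the same
parameters, then `f*ν` is equivalent to `μ` in the strong sense: there is `α > 0`
with `α⁻¹ μ(B) ≤ ν(f(B)) ≤ α μ(B)` for every Borel `B ⊆ E`. -/
theorem moran_pushforward_equivalent
    (n : ℕ → ℕ) (r : ℕ → ℝ)
    (hn : ∀ k ≥ 1, 2 ≤ n k)
    (hr : ∀ k ≥ 1, 0 < r k ∧ (n k : ℝ) * r k ≤ 1)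
    (ME MF : MoranStructure n r)
    (μ ν : Measure ℝ)
    (hμ : IsUniformBernoulli ME μ) (hν : IsUniformBernoulli MF ν)
    (C : ℝ) (hC : 1 ≤ C) (f : ℝ → ℝ)
    (hfbil : ∀ x ∈ ME.moranSet, ∀ y ∈ ME.moranSet,
      C⁻¹ * |x - y| ≤ |f x - f y| ∧ |f x - f y| ≤ C * |x - y|)
    (hfim : f '' ME.moranSet = MF.moranSet) :
    ∃ α : ℝ, 0 < α ∧
      ∀ B : Set ℝ, MeasurableSet B → B ⊆ ME.moranSet →
        ENNReal.ofReal α⁻¹ * μ B ≤ ν (f '' B) ∧ ν (f '' B) ≤ ENNReal.ofReal α * μ B := by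
  have hC₀ : 0 < C := by linarith
  have hanti : ∀ x ∈ ME.moranSet, ∀ y ∈ ME.moranSet, dist x y ≤ C * dist (f x) (f y) :=
    fun x hx y hy => by
      simpa only [Real.dist_eq, inv_mul_le_iff₀ hC₀] using (hfbil x hx y hy).1
  have hf : LipschitzOnWith C.toNNReal f ME.moranSet :=
    LipschitzOnWith.of_dist_le' fun x hx y hy => by
      simpa only [Real.dist_eq] using (hfbil x hx y hy).2
  have hg : LipschitzOnWith C.toNNReal (invFunOn f ME.moranSet) MF.moranSet :=
    hfim ▸ lipschitzOnWith_invFunOn hanti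
  have hsurj : SurjOn f ME.moranSet MF.moranSet := hfim ▸ surjOn_image f _
  have hinv : LeftInvOn (invFunOn f ME.moranSet) f ME.moranSet :=
    InjOn.leftInvOn_invFunOn fun x hx y hy hxy => dist_le_zero.mp <| by
      simpa [hxy] using hanti x hx y hy
  have hα : ENNReal.ofReal (2 * C + 2) = 2 * C.toNNReal + 2 := by
    rw [ENNReal.ofReal_add (by positivity) zero_le_two, ENNReal.ofReal_mul zero_le_two]
    norm_num [ENNReal.ofReal]
  refine ⟨2 * C + 2, by positivity, fun B _ hB => ⟨?_, ?_⟩⟩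
  · rw [ENNReal.ofReal_inv_of_pos (by positivity), ENNReal.inv_mul_le_iff
      (ENNReal.ofReal_pos.mpr (by positivity)).ne' ENNReal.ofReal_ne_top, hα]
    calc μ B = μ (invFunOn f ME.moranSet '' (f '' B)) := by rw [hinv.image_image' hB]
      _ ≤ _ := measure_image_le hn hr hν hμ hg (hinv.mapsTo hsurj) (hfim ▸ image_mono hB)
  · exact hα ▸ measure_image_le hn hr hμ hν hf (hfim ▸ mapsTo_image f _) hB
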